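/- Let A and B be von Neumann algebras, H a complex Hilbert space, P ∈ L(H) positive, and suppose Φ₁ ∈ CP_P(A;H) and Φ₂ ∈ CP_P(B;H) are compatible, i.e. there exists Ψ ∈ CP_P(A ⊗ B; H) with Ψ(a ⊗ 1_B) = Φ₁(a) and Ψ(1_A ⊗ b) = Φ₂(b) for all a ∈ A, b ∈ B. If Φ₁ is extremal in CP_P(A;H) or Φ₂ is extremal in CP_P(B;H), then the joint map Ψ is unique: any Ψ' ∈ CP_P(A ⊗ B; H) with the same marginals equals Ψ. -/

import Mathlib

open scoped ComplexOrder ComplexInnerProductSpace Topology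

noncomputable section

/-- A linear map `Φ : A → L(H)` from a `*`-algebra into the bounded operators on a complex
Hilbert space `H` is *completely positive* if for all `n`, `a₁, …, aₙ ∈ A` and
`φ₁, …, φₙ ∈ H` one has `∑ j k, ⟪φ j, Φ (star (a j) * a k) (φ k)⟫ ≥ 0`. -/
def IsCompletelyPositive {A : Type*} [NonUnitalNonAssocSemiring A] [StarRing A] [Module ℂ A]
    {H : Type*} [NormedAddCommGroup H] [InnerProductSpace ℂ H]
    (Φ : A →ₗ[ℂ] H →L[ℂ] H) : Prop :=
  ∀ (n : ℕ) (a : Fin n → A) (v : Fin n → H),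
    0 ≤ ∑ j, ∑ k, ⟪v j, Φ (star (a j) * a k) (v k)⟫

/-- The convex set `CP_P(A;H)` of completely positive maps `Φ : A → L(H)` with `Φ 1 = P`. -/
def CPWithUnit (A : Type*) [Ring A] [StarRing A] [Algebra ℂ A]
    (H : Type*) [NormedAddCommGroup H] [InnerProductSpace ℂ H]
    (P : H →L[ℂ] H) : Set (A →ₗ[ℂ] H →L[ℂ] H) :=
  {Φ | IsCompletelyPositive Φ ∧ Φ 1 = P}

/-- `x` is an extremal point of the convex set `S`: whenever `x` is a nontrivial convex
combination of two members of `S`, they coincide. -/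
def IsExtremalIn {V : Type*} [AddCommMonoid V] [Module ℂ V] (S : Set V) (x : V) : Prop :=
  x ∈ S ∧ ∀ y ∈ S, ∀ z ∈ S, ∀ t : ℝ, 0 < t → t < 1 →
    x = (t : ℂ) • y + ((1 - t : ℝ) : ℂ) • z → y = z

/-- `C`, together with the bilinear map `tmul`, is a tensor product of the algebras
`A` and `B`: `tmul` is multiplicative (`(a ⊗ b)(a' ⊗ b') = aa' ⊗ bb'`), star-preserving,
unital, and the span of the elementary tensors is dense in `C`. -/
structure IsTensorProductOfAlgebras (A B C : Type*)
    [CStarAlgebra A] [CStarAlgebra B] [CStarAlgebra C]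
    (tmul : A →ₗ[ℂ] B →ₗ[ℂ] C) : Prop where
  tmul_mul : ∀ (a a' : A) (b b' : B), tmul a b * tmul a' b' = tmul (a * a') (b * b')
  tmul_star : ∀ (a : A) (b : B), star (tmul a b) = tmul (star a) (star b)
  tmul_one : tmul 1 1 = 1
  dense_span : Dense (↑(Submodule.span ℂ {c : C | ∃ a b, c = tmul a b}) : Set C)

/-!
For `0 ≤ b ≤ 1` in `B`, the maps `a ↦ Ψ (a ⊗ b) + Ψ' (a ⊗ (1 - b))` and
`a ↦ Ψ' (a ⊗ b) + Ψ (a ⊗ (1 - b))` lie in `CP_P(A;H)` (the common second marginal makes them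
unital) and average to `Φ₁`. Extremality of `Φ₁` forces them to coincide, which says exactly
`Ψ (a ⊗ b) = Ψ' (a ⊗ b)`. Such `b` span `B`, and the elementary tensors span a dense subspace of
`A ⊗ B`, on which a completely positive map is determined: each functional `c ↦ ⟪v, Ψ c v⟫` is
positive, hence continuous.
-/

section CompletelyPositive

variable {H : Type*} [NormedAddCommGroup H] [InnerProductSpace ℂ H]

lemma LinearMap.ext_of_inner_apply_self {A : Type*} [AddCommMonoid A] [Module ℂ A]
    {Φ Φ' : A →ₗ[ℂ] H →L[ℂ] H} (h : ∀ c v, ⟪v, Φ c v⟫ = ⟪v, Φ' c v⟫) : Φ = Φ' := by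
  ext c : 1
  refine ContinuousLinearMap.coe_injective <| (ext_inner_map _ _).mp fun v => ?_
  simpa only [ContinuousLinearMap.coe_coe, inner_conj_symm] using congrArg (starRingEnd ℂ) (h c v)

def vectorFunctional {A : Type*} [AddCommMonoid A] [Module ℂ A]
    (Φ : A →ₗ[ℂ] H →L[ℂ] H) (v : H) : A →ₗ[ℂ] ℂ :=
  (innerSL ℂ v).toLinearMap ∘ₗ (ContinuousLinearMap.apply ℂ H v).toLinearMap ∘ₗ Φ

@[simp]
lemma vectorFunctional_apply {A : Type*} [AddCommMonoid A] [Module ℂ A]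
    (Φ : A →ₗ[ℂ] H →L[ℂ] H) (v : H) (c : A) : vectorFunctional Φ v c = ⟪v, Φ c v⟫ :=
  rfl

namespace IsCompletelyPositive

lemma add {A : Type*} [NonUnitalNonAssocSemiring A] [StarRing A] [Module ℂ A]
    {Φ Φ' : A →ₗ[ℂ] H →L[ℂ] H} (hΦ : IsCompletelyPositive Φ) (hΦ' : IsCompletelyPositive Φ') :
    IsCompletelyPositive (Φ + Φ') := fun n a v => by
  simpa only [LinearMap.add_apply, add_apply, inner_add_right,
    Finset.sum_add_distrib] using add_nonneg (hΦ n a v) (hΦ' n a v)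

variable {A : Type*} [CStarAlgebra A] [PartialOrder A] [StarOrderedRing A]
  {Φ : A →ₗ[ℂ] H →L[ℂ] H}

lemma inner_apply_nonneg (hΦ : IsCompletelyPositive Φ) {c : A} (hc : 0 ≤ c) (v : H) :
    0 ≤ ⟪v, Φ c v⟫ := by
  obtain ⟨s, rfl⟩ := CStarAlgebra.nonneg_iff_eq_star_mul_self.mp hc
  simpa using hΦ 1 (fun _ => s) (fun _ => v)

lemma continuous_vectorFunctional (hΦ : IsCompletelyPositive Φ) (v : H) :
    Continuous (vectorFunctional Φ v) :=
  map_continuous <| PositiveLinearMap.mk₀ (vectorFunctional Φ v) fun _ hc =>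
    hΦ.inner_apply_nonneg hc v

end IsCompletelyPositive

lemma IsCompletelyPositive.ext_of_dense_span {A : Type*} [CStarAlgebra A]
    {Φ Φ' : A →ₗ[ℂ] H →L[ℂ] H} (hΦ : IsCompletelyPositive Φ) (hΦ' : IsCompletelyPositive Φ')
    {s : Set A} (hs : Dense (Submodule.span ℂ s : Set A)) (h : Set.EqOn Φ Φ' s) : Φ = Φ' := by
  let : PartialOrder A := CStarAlgebra.spectralOrder A
  have : StarOrderedRing A := CStarAlgebra.spectralOrderedRing A
  refine LinearMap.ext_of_inner_apply_self fun c v =>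
    congrFun (?_ : ⇑(vectorFunctional Φ v) = vectorFunctional Φ' v) c
  refine Continuous.ext_on hs (hΦ.continuous_vectorFunctional v)
    (hΦ'.continuous_vectorFunctional v) (LinearMap.eqOn_span' fun x hx => ?_)
  simp [h hx]

end CompletelyPositive

lemma IsExtremalIn.eq_of_two_smul_eq_add {V : Type*} [AddCommMonoid V] [Module ℂ V]
    {S : Set V} {x y z : V} (hx : IsExtremalIn S x) (hy : y ∈ S) (hz : z ∈ S)
    (h : (2 : ℂ) • x = y + z) : y = z :=
  hx.2 y hy z hz (1 / 2) one_half_pos one_half_lt_one <| by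
    rw [show 1 - (1 / 2 : ℝ) = 1 / 2 by norm_num, ← smul_add, ← h, smul_smul]
    norm_num

namespace IsTensorProductOfAlgebras

variable {A B C : Type*} [CStarAlgebra A] [CStarAlgebra B] [CStarAlgebra C]
  {tmul : A →ₗ[ℂ] B →ₗ[ℂ] C}

lemma flip (htp : IsTensorProductOfAlgebras A B C tmul) :
    IsTensorProductOfAlgebras B A C tmul.flip where
  tmul_mul b b' a a' := htp.tmul_mul a a' b b'
  tmul_star b a := htp.tmul_star a b
  tmul_one := htp.tmul_one
  dense_span := by
    rw [show {c : C | ∃ b a, c = tmul.flip b a} = {c | ∃ a b, c = tmul a b} from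
      Set.ext fun _ => exists_comm]
    exact htp.dense_span

variable {H : Type*} [NormedAddCommGroup H] [InnerProductSpace ℂ H]

lemma isCompletelyPositive_comp_flip (htp : IsTensorProductOfAlgebras A B C tmul)
    [PartialOrder B] [StarOrderedRing B] {Θ : C →ₗ[ℂ] H →L[ℂ] H}
    (hΘ : IsCompletelyPositive Θ) {b : B} (hb : 0 ≤ b) :
    IsCompletelyPositive (Θ ∘ₗ tmul.flip b) := by
  obtain ⟨r, rfl⟩ := CStarAlgebra.nonneg_iff_eq_star_mul_self.mp hb
  intro n a v
  simpa only [LinearMap.comp_apply, LinearMap.flip_apply, htp.tmul_star, htp.tmul_mul] using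
    hΘ n (fun j => tmul (a j) r) v

lemma comp_flip_add_comp_flip_mem (htp : IsTensorProductOfAlgebras A B C tmul)
    [PartialOrder B] [StarOrderedRing B] {P : H →L[ℂ] H} {Ψ Ψ' : C →ₗ[ℂ] H →L[ℂ] H}
    (hΨ : Ψ ∈ CPWithUnit C H P) (hΨ' : Ψ' ∈ CPWithUnit C H P)
    (hmarg : ∀ b, Ψ (tmul 1 b) = Ψ' (tmul 1 b)) {b : B} (hb₀ : 0 ≤ b) (hb₁ : b ≤ 1) :
    Ψ ∘ₗ tmul.flip b + Ψ' ∘ₗ tmul.flip (1 - b) ∈ CPWithUnit A H P := by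
  refine ⟨(htp.isCompletelyPositive_comp_flip hΨ.1 hb₀).add
    (htp.isCompletelyPositive_comp_flip hΨ'.1 (sub_nonneg.mpr hb₁)), ?_⟩
  simp [map_sub, hmarg b, htp.tmul_one, hΨ'.2]

lemma comp_flip_eq_of_isExtremalIn (htp : IsTensorProductOfAlgebras A B C tmul)
    [PartialOrder B] [StarOrderedRing B] {P : H →L[ℂ] H} {Φ : A →ₗ[ℂ] H →L[ℂ] H}
    (hΦ : IsExtremalIn (CPWithUnit A H P) Φ) {Ψ Ψ' : C →ₗ[ℂ] H →L[ℂ] H}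
    (hΨ : Ψ ∈ CPWithUnit C H P) (hΨ' : Ψ' ∈ CPWithUnit C H P)
    (hmarg₁ : ∀ a, Ψ (tmul a 1) = Φ a) (hmarg₁' : ∀ a, Ψ' (tmul a 1) = Φ a)
    (hmarg₂ : ∀ b, Ψ (tmul 1 b) = Ψ' (tmul 1 b)) {b : B} (hb₀ : 0 ≤ b) (hb₁ : b ≤ 1) :
    Ψ ∘ₗ tmul.flip b = Ψ' ∘ₗ tmul.flip b := by
  have hΦΨ : Φ = Ψ ∘ₗ tmul.flip 1 := LinearMap.ext fun a => (hmarg₁ a).symm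
  have hΦΨ' : Φ = Ψ' ∘ₗ tmul.flip 1 := LinearMap.ext fun a => (hmarg₁' a).symm
  have hswap := hΦ.eq_of_two_smul_eq_add
    (htp.comp_flip_add_comp_flip_mem hΨ hΨ' hmarg₂ hb₀ hb₁)
    (htp.comp_flip_add_comp_flip_mem hΨ' hΨ (fun b => (hmarg₂ b).symm) hb₀ hb₁) <| by
      simp only [map_sub, LinearMap.comp_sub]
      linear_combination (norm := module) hΦΨ + hΦΨ'
  simp only [map_sub, LinearMap.comp_sub, ← hΦΨ, ← hΦΨ'] at hswap
  linear_combination (norm := module) (1 / 2 : ℂ) • hswap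

theorem eq_of_isExtremalIn_fst (htp : IsTensorProductOfAlgebras A B C tmul)
    {P : H →L[ℂ] H} {Φ : A →ₗ[ℂ] H →L[ℂ] H} (hΦ : IsExtremalIn (CPWithUnit A H P) Φ)
    {Ψ Ψ' : C →ₗ[ℂ] H →L[ℂ] H} (hΨ : Ψ ∈ CPWithUnit C H P) (hΨ' : Ψ' ∈ CPWithUnit C H P)
    (hmarg₁ : ∀ a, Ψ (tmul a 1) = Φ a) (hmarg₁' : ∀ a, Ψ' (tmul a 1) = Φ a)
    (hmarg₂ : ∀ b, Ψ (tmul 1 b) = Ψ' (tmul 1 b)) : Ψ = Ψ' := by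
  let : PartialOrder B := CStarAlgebra.spectralOrder B
  have : StarOrderedRing B := CStarAlgebra.spectralOrderedRing B
  have hslice : tmul.flip.compr₂ Ψ = tmul.flip.compr₂ Ψ' := by
    refine LinearMap.ext_on CStarAlgebra.span_nonneg_inter_unitClosedBall ?_
    rintro b ⟨hb₀, hb₁⟩
    exact htp.comp_flip_eq_of_isExtremalIn hΦ hΨ hΨ' hmarg₁ hmarg₁' hmarg₂ hb₀
      ((CStarAlgebra.norm_le_one_iff_of_nonneg b hb₀).mp (by simpa using hb₁))
  refine hΨ.1.ext_of_dense_span hΨ'.1 htp.dense_span ?_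
  rintro _ ⟨a, b, rfl⟩
  exact LinearMap.congr_fun₂ hslice b a

end IsTensorProductOfAlgebras

theorem joint_map_unique_of_extremal_marginal
    {A B C : Type*} [CStarAlgebra A] [CStarAlgebra B] [CStarAlgebra C]
    (tmul : A →ₗ[ℂ] B →ₗ[ℂ] C) (htp : IsTensorProductOfAlgebras A B C tmul)
    {H : Type*} [NormedAddCommGroup H] [InnerProductSpace ℂ H]
    (P : H →L[ℂ] H)
    (Φ₁ : A →ₗ[ℂ] H →L[ℂ] H) (Φ₂ : B →ₗ[ℂ] H →L[ℂ] H)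
    (Ψ Ψ' : C →ₗ[ℂ] H →L[ℂ] H)
    (hΨ : Ψ ∈ CPWithUnit C H P) (hΨ' : Ψ' ∈ CPWithUnit C H P)
    (hmarg₁ : ∀ a : A, Ψ (tmul a 1) = Φ₁ a) (hmarg₂ : ∀ b : B, Ψ (tmul 1 b) = Φ₂ b)
    (hmarg₁' : ∀ a : A, Ψ' (tmul a 1) = Φ₁ a) (hmarg₂' : ∀ b : B, Ψ' (tmul 1 b) = Φ₂ b)
    (hext : IsExtremalIn (CPWithUnit A H P) Φ₁ ∨ IsExtremalIn (CPWithUnit B H P) Φ₂) :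
    Ψ = Ψ' := by
  rcases hext with hext | hext
  · exact htp.eq_of_isExtremalIn_fst hext hΨ hΨ' hmarg₁ hmarg₁'
      fun b => (hmarg₂ b).trans (hmarg₂' b).symm
  · exact htp.flip.eq_of_isExtremalIn_fst hext hΨ hΨ' hmarg₂ hmarg₂'
      fun a => (hmarg₁ a).trans (hmarg₁' a).symm
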